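/- arXiv:1907.04036 — 2 statements merged into one kernel-verified Lean document; each statement's English description precedes it below -/
import Mathlib

section
/- Γ with its order and the topology generated by the sets ↑p° and ↓q⁻ (p, q rational) is a Priestley space: it is compact, the order is closed in Γ × Γ, and for any x ≰ y in Γ there is a clopen up-set containing x but not y. -/
open scoped Classical

noncomputable section

/-- Validity predicate: `(r, false)` encodes `r⁻` for `r ∈ (0,1]`;
`(q, true)` encodes `q°` for rational `q ∈ [0,1]`. -/
def GammaValid (x : ℝ × Bool) : Prop :=
  (x.2 = false ∧ 0 < x.1 ∧ x.1 ≤ 1) ∨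
  (x.2 = true ∧ 0 ≤ x.1 ∧ x.1 ≤ 1 ∧ ∃ q : ℚ, (q : ℝ) = x.1)

lemma gammaValid_of (r : ℝ) (b : Bool) (h0 : 0 ≤ r) (h1 : r ≤ 1)
    (hr : b = true → ∃ q : ℚ, (q : ℝ) = r) (hm : b = false → 0 < r) :
    GammaValid (r, b) := by
  cases b
  · exact Or.inl ⟨rfl, hm rfl, h1⟩
  · exact Or.inr ⟨rfl, h0, h1, hr rfl⟩

/-- The doubled unit interval `Γ`, ordered lexicographically:
compare real values first, and `r⁻ < r°` at equal value. -/
abbrev Gamma : Type := {x : Lex (ℝ × Bool) // GammaValid (ofLex x)}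

def Gamma.re (x : Gamma) : ℝ := (ofLex x.1).1
def Gamma.tag (x : Gamma) : Bool := (ofLex x.1).2

def Gamma.mk' (r : ℝ) (b : Bool) (h : GammaValid (r, b)) : Gamma := ⟨toLex (r, b), h⟩

@[simp] lemma Gamma.re_mk' (r : ℝ) (b : Bool) (h : GammaValid (r, b)) :
    (Gamma.mk' r b h).re = r := rfl
@[simp] lemma Gamma.tag_mk' (r : ℝ) (b : Bool) (h : GammaValid (r, b)) :
    (Gamma.mk' r b h).tag = b := rfl

/-- `0°` -/
def gzero : Gamma :=
  Gamma.mk' 0 true (gammaValid_of _ _ le_rfl zero_le_one (fun _ => ⟨0, by norm_num⟩) (by simp))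

/-- `1°` -/
def gone : Gamma :=
  Gamma.mk' 1 true (gammaValid_of _ _ zero_le_one le_rfl (fun _ => ⟨1, by norm_num⟩) (by simp))

/-- `q°` for a rational `q ∈ [0,1]`. -/
def mkCirc (q : ℚ) (h0 : 0 ≤ q) (h1 : q ≤ 1) : Gamma :=
  Gamma.mk' (q : ℝ) true
    (gammaValid_of _ _ (by exact_mod_cast h0) (by exact_mod_cast h1)
      (fun _ => ⟨q, rfl⟩) (by simp))

/-- `r⁻` for a real `r ∈ (0,1]`. -/
def mkMinus (r : ℝ) (h0 : 0 < r) (h1 : r ≤ 1) : Gamma :=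
  Gamma.mk' r false
    (gammaValid_of _ _ h0.le h1 (by simp) (fun _ => h0))

lemma Gamma.le_iff {x y : Gamma} :
    x ≤ y ↔ x.re < y.re ∨ (x.re = y.re ∧ x.tag ≤ y.tag) := by
  change x.1 ≤ y.1 ↔ _
  rw [show x.1 = toLex (ofLex x.1) from rfl, show y.1 = toLex (ofLex y.1) from rfl,
    Prod.Lex.le_iff]
  rfl

lemma Gamma.re_nonneg (x : Gamma) : 0 ≤ x.re := by
  rcases x.2 with ⟨_, h, _⟩ | ⟨_, h, _⟩ <;> [exact le_of_lt h; exact h]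

lemma Gamma.re_le_one (x : Gamma) : x.re ≤ 1 := by
  rcases x.2 with ⟨_, _, h⟩ | ⟨_, _, h, _⟩ <;> exact h

lemma Gamma.tag_rat {x : Gamma} (h : x.tag = true) : ∃ q : ℚ, (q : ℝ) = x.re := by
  rcases x.2 with ⟨h', _⟩ | ⟨_, _, _, hq⟩
  · exact absurd (h'.symm.trans h) (by simp)
  · exact hq

lemma Gamma.tag_pos {x : Gamma} (h : x.tag = false) : 0 < x.re := by
  rcases x.2 with ⟨_, h', _⟩ | ⟨h', _⟩
  · exact h'
  · exact absurd (h'.symm.trans h) (by simp)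

lemma Gamma.re_mono {x y : Gamma} (h : x ≤ y) : x.re ≤ y.re := by
  rcases Gamma.le_iff.1 h with h | ⟨h, _⟩
  · exact le_of_lt h
  · exact le_of_eq h

lemma Gamma.ext' {x y : Gamma} (hre : x.re = y.re) (htag : x.tag = y.tag) : x = y := by
  apply Subtype.ext
  have hx : x.1 = toLex (x.re, x.tag) := rfl
  have hy : y.1 = toLex (y.re, y.tag) := rfl
  rw [hx, hy, hre, htag]

/-- The partial minus `∸` on `Γ`, made total by returning `0°` outside its domain
`{(x,y) | y ≤ x}`.  On the domain:  `r° ∸ s° = (r−s)°`, `r⁻ ∸ s° = (r−s)⁻`, and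
`r° ∸ s⁻ = r⁻ ∸ s⁻ = (r−s)°` if `r−s ∈ ℚ`, `(r−s)⁻` otherwise. -/
def gsub (x y : Gamma) : Gamma :=
  if h : y ≤ x then
    Gamma.mk' (x.re - y.re)
      (if y.tag then x.tag else if (∃ q : ℚ, (q : ℝ) = x.re - y.re) then true else false)
      (by
        have hle : y.re ≤ x.re := Gamma.re_mono h
        have hx1 := x.re_le_one
        have hy0 := y.re_nonneg
        apply gammaValid_of _ _ (by linarith) (by linarith)
        · intro ht
          split_ifs at ht with hy hq
          · obtain ⟨qx, hqx⟩ := Gamma.tag_rat ht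
            obtain ⟨qy, hqy⟩ := Gamma.tag_rat hy
            exact ⟨qx - qy, by push_cast [hqx, hqy]; ring⟩
          · exact hq
        · intro ht
          split_ifs at ht with hy hq
          · rcases Gamma.le_iff.1 h with hlt | ⟨_, htag⟩
            · linarith
            · rw [hy, ht] at htag; exact absurd htag (by decide)
          · refine lt_of_le_of_ne (by linarith) fun e => hq ⟨0, by rw [← e]; norm_num⟩)
  else gzero

/-- The derived operation `∸'` given by `x ∸' y = ⋁ {x ∸ q° ∣ y < q° ≤ x}`,
described here by its explicit formula (and again made total by `0°` off-domain). -/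
def gsub' (x y : Gamma) : Gamma :=
  if h : y ≤ x then
    Gamma.mk' (x.re - y.re)
      (if x.re - y.re = 0 then true
       else if (y.tag = false ∧ ∃ q : ℚ, (q : ℝ) = y.re) then x.tag else false)
      (by
        have hle : y.re ≤ x.re := Gamma.re_mono h
        have hx1 := x.re_le_one
        have hy0 := y.re_nonneg
        apply gammaValid_of _ _ (by linarith) (by linarith)
        · intro ht
          split_ifs at ht with h0 hc
          · exact ⟨0, by rw [h0]; norm_num⟩
          · obtain ⟨qx, hqx⟩ := Gamma.tag_rat ht
            obtain ⟨qy, hqy⟩ := hc.2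
            exact ⟨qx - qy, by push_cast [hqx, hqy]; ring⟩
        · intro ht
          split_ifs at ht with h0 hc
          · exact lt_of_le_of_ne (by linarith) (Ne.symm h0)
          · exact lt_of_le_of_ne (by linarith) (Ne.symm h0))
  else gzero

/-- The partial plus on `Γ` (total, with junk value `0°` when the sum exceeds `1`):
`r° + s° = (r+s)°` and any sum involving a `⁻`-element is a `⁻`-element. -/
def gadd (x y : Gamma) : Gamma :=
  if h : x.re + y.re ≤ 1 then
    Gamma.mk' (x.re + y.re) (x.tag && y.tag)
      (by
        have hx0 := x.re_nonneg
        have hy0 := y.re_nonneg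
        apply gammaValid_of _ _ (by linarith) h
        · intro ht
          rw [Bool.and_eq_true] at ht
          obtain ⟨qx, hqx⟩ := Gamma.tag_rat ht.1
          obtain ⟨qy, hqy⟩ := Gamma.tag_rat ht.2
          exact ⟨qx + qy, by push_cast [hqx, hqy]; ring⟩
        · intro ht
          rcases Bool.and_eq_false_iff.1 ht with hx | hy
          · have := Gamma.tag_pos hx; linarith
          · have := Gamma.tag_pos hy; linarith)
  else gzero

/-- Finite sums in `Γ` (total, with junk value `0°` when the real sum exceeds `1`):
real parts add up, and the result is a `°`-element iff every summand is. -/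
def gsum {α : Type*} (s : Finset α) (f : α → Gamma) : Gamma :=
  if h : ∑ x ∈ s, (f x).re ≤ 1 then
    Gamma.mk' (∑ x ∈ s, (f x).re) (if ∀ x ∈ s, (f x).tag = true then true else false)
      (by
        have h0 : 0 ≤ ∑ x ∈ s, (f x).re :=
          Finset.sum_nonneg fun x _ => (f x).re_nonneg
        apply gammaValid_of _ _ h0 h
        · intro ht
          split_ifs at ht with hall
          · have : ∀ x ∈ s, ∃ q : ℚ, (q : ℝ) = (f x).re := fun x hx => Gamma.tag_rat (hall x hx)
            choose g hg using this
            refine ⟨∑ x ∈ s.attach, g x.1 x.2, ?_⟩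
            push_cast
            rw [← Finset.sum_attach s fun x => (f x).re]
            exact Finset.sum_congr rfl fun x _ => hg x.1 x.2
        · intro ht
          split_ifs at ht with hall
          · push_neg at hall
            obtain ⟨x, hxs, hx⟩ := hall
            replace hx : (f x).tag = false := by
              cases hxt : (f x).tag
              · rfl
              · exact absurd hxt hx
            calc (0:ℝ) < (f x).re := Gamma.tag_pos hx
              _ ≤ _ := Finset.single_le_sum (fun y _ => (f y).re_nonneg) hxs)
  else gzero

/-- The collapsing map `γ : Γ → [0,1]`, `r⁻, r° ↦ r`. -/
def gammaMap (x : Gamma) : unitInterval := ⟨x.re, x.re_nonneg, x.re_le_one⟩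

/-- The section `ι : [0,1] → Γ`: rationals go to `°`-elements, irrationals to `⁻`-elements. -/
def iota (r : unitInterval) : Gamma :=
  if h : ∃ q : ℚ, (q : ℝ) = r.1 then
    Gamma.mk' r.1 true (gammaValid_of _ _ r.2.1 r.2.2 (fun _ => h) (by simp))
  else
    Gamma.mk' r.1 false
      (gammaValid_of _ _ r.2.1 r.2.2 (by simp)
        (fun _ => lt_of_le_of_ne r.2.1 fun e => h ⟨0, by rw [← e]; norm_num⟩))

/-- Subbasis for the Priestley topology on `Γ`: the sets `↑p°` (for `p ∈ ℚ ∩ [0,1]`) and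
`↓q⁻` (for `q ∈ ℚ ∩ (0,1]`). -/
def gammaSubbasis : Set (Set Gamma) :=
  {S | ∃ x : Gamma, x.tag = true ∧ S = Set.Ici x} ∪
  {S | ∃ x : Gamma, x.tag = false ∧ (∃ q : ℚ, (q : ℝ) = x.re) ∧ S = Set.Iic x}

instance : TopologicalSpace Gamma := TopologicalSpace.generateFrom gammaSubbasis

/-- `Γ`-valued (finitely additive, probability) measures on a bounded lattice `D`. -/
def IsGMeasure {D : Type*} [Lattice D] [BoundedOrder D] (μ : D → Gamma) : Prop :=
  μ ⊥ = gzero ∧ μ ⊤ = gone ∧ Monotone μ ∧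
  ∀ a b : D, gsub' (μ a) (μ (a ⊓ b)) ≤ gsub (μ (a ⊔ b)) (μ b) ∧
    gsub' (μ (a ⊔ b)) (μ b) ≤ gsub (μ a) (μ (a ⊓ b))

/-- Classical finitely additive probability measures on a bounded lattice `D`. -/
def IsCMeasure {D : Type*} [Lattice D] [BoundedOrder D] (m : D → ℝ) : Prop :=
  m ⊥ = 0 ∧ m ⊤ = 1 ∧ Monotone m ∧
  ∀ a b : D, m a + m b = m (a ⊔ b) + m (a ⊓ b)

/-! The subbasic sets generate exactly the order topology of `Γ`: since the rationals are dense,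
every open ray `(a, →)` is a union of sets `↑p°` and every `(←, a)` a union of sets `↓q⁻`, while
`q⁻ ⋖ q°` gives `↑q° = (q⁻, →)` and `↓q⁻ = (←, q°)`. The order is complete (a supremum sits over
the real supremum, on the `°`-copy when a `°`-element attains it and on the `⁻`-copy otherwise),
so `Γ` is compact, and its order is closed as in any linear order topology. Finally `↑p°` is open
and, as the complement of `(←, p°)`, closed; for `y < x` a `p°` in `(y, x]` separates them. -/

namespace Gamma

open Set TopologicalSpace

lemma lt_iff {x y : Gamma} :
    x < y ↔ x.re < y.re ∨ (x.re = y.re ∧ x.tag = false ∧ y.tag = true) := by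
  change x.1 < y.1 ↔ _
  rw [show x.1 = toLex (ofLex x.1) from rfl, show y.1 = toLex (ofLex y.1) from rfl,
    Prod.Lex.toLex_lt_toLex, Bool.lt_iff]
  rfl

lemma le_of_re_lt {x y : Gamma} (h : x.re < y.re) : x ≤ y := le_iff.2 (Or.inl h)

lemma lt_of_re_lt {x y : Gamma} (h : x.re < y.re) : x < y := lt_iff.2 (Or.inl h)

lemma le_of_re_le {x y : Gamma} (h : x.re ≤ y.re) (htag : x.re = y.re → x.tag ≤ y.tag) :
    x ≤ y :=
  le_iff.2 (h.lt_or_eq.imp_right fun he => ⟨he, htag he⟩)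

lemma tag_eq_true_of_re_eq_zero {x : Gamma} (h : x.re = 0) : x.tag = true := by
  by_contra ht
  exact (tag_pos (Bool.eq_false_iff.2 ht)).ne' h

lemma gzero_le (x : Gamma) : gzero ≤ x :=
  le_of_re_le x.re_nonneg fun h => by rw [tag_eq_true_of_re_eq_zero h.symm]; exact Bool.le_true _

lemma exists_isLUB (S : Set Gamma) : ∃ a, IsLUB S a := by
  rcases S.eq_empty_or_nonempty with rfl | hS
  · exact ⟨gzero, isLUB_empty_iff.2 gzero_le⟩
  set s := sSup (re '' S)
  have hle_s : ∀ z ∈ S, z.re ≤ s := fun z hz =>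
    le_csSup ⟨1, forall_mem_image.2 fun z _ => z.re_le_one⟩ (mem_image_of_mem _ hz)
  have hs_le : ∀ u ∈ upperBounds S, s ≤ u.re := fun u hu =>
    csSup_le (hS.image _) (forall_mem_image.2 fun z hz => re_mono (hu hz))
  by_cases hmax : ∃ x ∈ S, x.re = s ∧ x.tag = true
  · obtain ⟨x, hxS, hxs, hxt⟩ := hmax
    exact ⟨x, IsGreatest.isLUB
      ⟨hxS, fun z hz => le_of_re_le (hxs ▸ hle_s z hz) fun _ => hxt ▸ Bool.le_true _⟩⟩
  have hs_le_one : s ≤ 1 := csSup_le (hS.image _) (forall_mem_image.2 fun z _ => z.re_le_one)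
  obtain ⟨x, hxS⟩ := hS
  have hs_pos : 0 < s := by
    refine (x.re_nonneg.trans (hle_s x hxS)).lt_of_ne fun hs => ?_
    have hxs : x.re = s := le_antisymm (hle_s x hxS) (hs ▸ x.re_nonneg)
    exact hmax ⟨x, hxS, hxs, tag_eq_true_of_re_eq_zero (hxs.trans hs.symm)⟩
  refine ⟨mkMinus s hs_pos hs_le_one, fun z hz => le_of_re_le (hle_s z hz) fun hzs => ?_,
    fun u hu => le_of_re_le (hs_le u hu) fun _ => Bool.false_le _⟩
  rw [Bool.eq_false_iff.2 fun hzt => hmax ⟨z, hz, hzs, hzt⟩]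
  exact le_rfl

instance : SupSet Gamma := ⟨fun S => (exists_isLUB S).choose⟩

instance : CompleteLattice Gamma where
  __ := (inferInstance : Lattice Gamma)
  __ := completeLatticeOfSup Gamma fun S => (exists_isLUB S).choose_spec

instance : CompleteLinearOrder Gamma :=
  { (inferInstance : CompleteLattice Gamma), (inferInstance : LinearOrder Gamma),
    LinearOrder.toBiheytingAlgebra _ with }

lemma exists_tag_true_mem_Ioc {x y : Gamma} (h : x < y) :
    ∃ z : Gamma, z.tag = true ∧ z ∈ Ioc x y := by
  rcases lt_iff.1 h with hlt | ⟨-, -, hy⟩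
  · obtain ⟨p, hxp, hpy⟩ := exists_rat_btwn hlt
    have h0 : (0 : ℚ) ≤ p := by exact_mod_cast (x.re_nonneg.trans_lt hxp).le
    have h1 : p ≤ 1 := by exact_mod_cast (hpy.trans_le y.re_le_one).le
    exact ⟨mkCirc p h0 h1, rfl, lt_of_re_lt hxp, le_of_re_lt hpy⟩
  · exact ⟨y, hy, h, le_rfl⟩

lemma exists_tag_false_rat_mem_Ico {x y : Gamma} (h : x < y) :
    ∃ z : Gamma, z.tag = false ∧ (∃ q : ℚ, (q : ℝ) = z.re) ∧ z ∈ Ico x y := by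
  rcases lt_iff.1 h with hlt | ⟨hre, hx, hy⟩
  · obtain ⟨p, hxp, hpy⟩ := exists_rat_btwn hlt
    exact ⟨mkMinus p (x.re_nonneg.trans_lt hxp) (hpy.trans_le y.re_le_one).le, rfl, ⟨p, rfl⟩,
      le_of_re_lt hxp, lt_of_re_lt hpy⟩
  · obtain ⟨q, hq⟩ := tag_rat hy
    exact ⟨x, hx, ⟨q, hq.trans hre.symm⟩, le_rfl, h⟩

lemma covBy_of_re_eq {x y : Gamma} (hre : x.re = y.re) (hx : x.tag = false)
    (hy : y.tag = true) : x ⋖ y := by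
  refine ⟨lt_iff.2 (Or.inr ⟨hre, hx, hy⟩), fun z hxz hzy => ?_⟩
  have hxz' := re_mono hxz.le
  have hzy' := re_mono hzy.le
  rcases lt_iff.1 hxz with hlt | ⟨-, -, hz⟩
  · linarith
  rcases lt_iff.1 hzy with hlt | ⟨-, hz', -⟩
  · linarith
  exact Bool.noConfusion (hz.symm.trans hz')

lemma isOpen_Ici_of_tag_eq_true {z : Gamma} (hz : z.tag = true) : IsOpen (Ici z) :=
  isOpen_generateFrom_of_mem (Or.inl ⟨z, hz, rfl⟩)

lemma isOpen_Iic_of_tag_eq_false {z : Gamma} (hz : z.tag = false)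
    (hq : ∃ q : ℚ, (q : ℝ) = z.re) : IsOpen (Iic z) :=
  isOpen_generateFrom_of_mem (Or.inr ⟨z, hz, hq, rfl⟩)

protected lemma isOpen_Ioi (a : Gamma) : IsOpen (Ioi a) :=
  isOpen_iff_forall_mem_open.2 fun _ hy =>
    let ⟨z, hz, haz, hzy⟩ := exists_tag_true_mem_Ioc hy
    ⟨Ici z, Ici_subset_Ioi.2 haz, isOpen_Ici_of_tag_eq_true hz, hzy⟩

protected lemma isOpen_Iio (a : Gamma) : IsOpen (Iio a) :=
  isOpen_iff_forall_mem_open.2 fun _ hy =>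
    let ⟨z, hz, hq, hyz, hza⟩ := exists_tag_false_rat_mem_Ico hy
    ⟨Iic z, Iic_subset_Iio.2 hza, isOpen_Iic_of_tag_eq_false hz hq, hyz⟩

instance : OrderTopology Gamma := by
  refine ⟨le_antisymm (le_generateFrom ?_) (le_generateFrom ?_)⟩
  · rintro _ ⟨a, rfl | rfl⟩
    exacts [Gamma.isOpen_Ioi a, Gamma.isOpen_Iio a]
  · rintro _ (⟨z, hz, rfl⟩ | ⟨z, hz, ⟨q, hq⟩, rfl⟩)
    · rcases z.re_nonneg.eq_or_lt with h0 | hpos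
      · have hz_bot : z = ⊥ := eq_bot_iff.2 (ext' (y := gzero) h0.symm hz ▸ gzero_le ⊥)
        rw [hz_bot, Ici_bot]
        exact @isOpen_univ _ (generateFrom _)
      · rw [← (covBy_of_re_eq (x := mkMinus z.re hpos z.re_le_one) (y := z) rfl rfl hz).Ioi_eq]
        exact isOpen_generateFrom_of_mem ⟨_, Or.inl rfl⟩
    · have h0 : (0 : ℚ) ≤ q := by exact_mod_cast (hq ▸ tag_pos hz).le
      have h1 : q ≤ 1 := by exact_mod_cast hq ▸ z.re_le_one
      rw [← (covBy_of_re_eq (y := mkCirc q h0 h1) hq.symm hz rfl).Iio_eq]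
      exact isOpen_generateFrom_of_mem ⟨_, Or.inr rfl⟩

end Gamma

/-- `Γ` with its order and topology is a Priestley space: compact, with
closed order, and totally order-disconnected. -/
theorem gamma_priestley :
    CompactSpace Gamma ∧
    IsClosed {p : Gamma × Gamma | p.1 ≤ p.2} ∧
    ∀ x y : Gamma, ¬ x ≤ y →
      ∃ C : Set Gamma, IsClopen C ∧ IsUpperSet C ∧ x ∈ C ∧ y ∉ C := by
  refine ⟨inferInstance, isClosed_le_prod, fun x y hxy => ?_⟩
  obtain ⟨z, hz, hyz, hzx⟩ := Gamma.exists_tag_true_mem_Ioc (not_le.1 hxy)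
  exact ⟨Set.Ici z, ⟨isClosed_Ici, Gamma.isOpen_Ici_of_tag_eq_true hz⟩, isUpperSet_Ici z, hzx,
    hyz.not_ge⟩
end
end

section
/- Let X be a set and f : X → Γ a finitely supported function, i.e., supp(f) = {x : f(x) ≠ 0°} is finite and the sum of f over its support is defined and equals 1°. Then the function μ_f : P(X) → Γ, M ↦ Σ{f(x) : x ∈ M ∩ supp(f)}, is a well-defined Γ-valued measure on the power-set lattice P(X). -/
open scoped Classical

noncomputable section

lemma gsum_re' {α : Type*} {s : Finset α} {f : α → Gamma}
    (h : ∑ x ∈ s, (f x).re ≤ 1) : (gsum s f).re = ∑ x ∈ s, (f x).re := by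
  rw [gsum, dif_pos h]; rfl

lemma gsum_tag' {α : Type*} {s : Finset α} {f : α → Gamma}
    (h : ∑ x ∈ s, (f x).re ≤ 1) :
    (gsum s f).tag = true ↔ ∀ x ∈ s, (f x).tag = true := by
  rw [gsum, dif_pos h]
  simp only [Gamma.tag_mk']
  split_ifs with hall
  · exact ⟨fun _ => hall, fun _ => rfl⟩
  · simp only [Bool.false_eq_true, false_iff]; exact hall

lemma gsub_re' {x y : Gamma} (h : y ≤ x) : (gsub x y).re = x.re - y.re := by
  rw [gsub, dif_pos h]; rfl

lemma gsub_tag' {x y : Gamma} (h : y ≤ x) (hx : x.tag = true) (hy : y.tag = true) :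
    (gsub x y).tag = true := by
  rw [gsub, dif_pos h]; simp [hx, hy]

lemma gsub'_re' {x y : Gamma} (h : y ≤ x) : (gsub' x y).re = x.re - y.re := by
  rw [gsub', dif_pos h]; rfl

/-- a finitely supported `Γ`-valued function `f` on a set `X`, whose total
sum is defined and equal to `1°`, induces a `Γ`-valued measure on the power-set lattice
of `X`, given by `M ↦ Σ {f x ∣ x ∈ M ∩ supp f}`. -/
theorem finitely_supported_gives_measure (X : Type*) (f : X → Gamma)
    (hfin : {x : X | f x ≠ gzero}.Finite)
    (hsum : gsum hfin.toFinset f = gone) :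
    IsGMeasure (fun M : Set X => gsum (hfin.toFinset.filter fun x => x ∈ M) f) := by
  
  classical
  set S := hfin.toFinset with hS
  -- total sum facts
  have hle : ∑ x ∈ S, (f x).re ≤ 1 := by
    by_contra h
    rw [gsum, dif_neg h] at hsum
    have := congrArg Gamma.re hsum
    simp [gzero, gone] at this
  have htotal : ∑ x ∈ S, (f x).re = 1 := by
    have := congrArg Gamma.re hsum
    rw [gsum_re' hle] at this
    simpa [gone] using this
  have hall : ∀ x ∈ S, (f x).tag = true := by
    exact (gsum_tag' hle).1 (by rw [hsum]; rfl)
  -- partial sums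
  set m : Set X → ℝ := fun M => ∑ x ∈ S.filter (fun x => x ∈ M), (f x).re with hm
  have hmle : ∀ M : Set X, m M ≤ 1 := by
    intro M
    refine le_trans ?_ (le_of_eq htotal)
    exact Finset.sum_le_sum_of_subset_of_nonneg (Finset.filter_subset _ _)
      (fun x _ _ => (f x).re_nonneg)
  have hre : ∀ M : Set X,
      (gsum (S.filter (fun x => x ∈ M)) f).re = m M := fun M => gsum_re' (hmle M)
  have htag : ∀ M : Set X,
      (gsum (S.filter (fun x => x ∈ M)) f).tag = true := by
    intro M
    exact (gsum_tag' (hmle M)).2 (fun x hx => hall x (Finset.mem_filter.1 hx).1)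
  have hmono : ∀ {M N : Set X}, M ⊆ N →
      gsum (S.filter (fun x => x ∈ M)) f ≤ gsum (S.filter (fun x => x ∈ N)) f := by
    intro M N hMN
    have hmm : m M ≤ m N :=
      Finset.sum_le_sum_of_subset_of_nonneg
        (fun x hx => by
          rw [Finset.mem_filter] at hx ⊢
          exact ⟨hx.1, hMN hx.2⟩)
        (fun x _ _ => (f x).re_nonneg)
    rw [Gamma.le_iff, hre, hre, htag, htag]
    rcases lt_or_eq_of_le hmm with h | h
    · exact Or.inl h
    · exact Or.inr ⟨h, le_rfl⟩
  -- modularity of m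
  have hmod : ∀ a b : Set X, m a + m b = m (a ⊔ b) + m (a ⊓ b) := by
    intro a b
    simp only [hm, Finset.sum_filter, ← Finset.sum_add_distrib]
    refine Finset.sum_congr rfl fun x _ => ?_
    by_cases ha : x ∈ a <;> by_cases hb : x ∈ b <;>
      simp [ha, hb, Set.mem_union, Set.mem_inter_iff]
  refine ⟨?_, ?_, ?_, ?_⟩
  · -- bot
    show gsum (S.filter (fun x => x ∈ (⊥ : Set X))) f = gzero
    apply Gamma.ext'
    · rw [hre]
      simp [hm, Set.bot_eq_empty, gzero]
    · rw [htag]; rfl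
  · -- top
    have : S.filter (fun x => x ∈ (⊤ : Set X)) = S := by
      apply Finset.filter_true_of_mem
      intro x _; trivial
    show gsum (S.filter (fun x => x ∈ (⊤ : Set X))) f = gone
    rw [this]; exact hsum
  · intro M N hMN; exact hmono hMN
  · intro a b
    have hIA : gsum (S.filter (fun x => x ∈ a ⊓ b)) f ≤
        gsum (S.filter (fun x => x ∈ a)) f := hmono inf_le_left
    have hBU : gsum (S.filter (fun x => x ∈ b)) f ≤
        gsum (S.filter (fun x => x ∈ a ⊔ b)) f := hmono le_sup_right
    have hIU : gsum (S.filter (fun x => x ∈ a ⊓ b)) f ≤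
        gsum (S.filter (fun x => x ∈ a ⊔ b)) f := hmono (le_trans inf_le_left le_sup_left)
    have hBA' : gsum (S.filter (fun x => x ∈ a ⊓ b)) f ≤
        gsum (S.filter (fun x => x ∈ b)) f := hmono inf_le_right
    have key : m a - m (a ⊓ b) = m (a ⊔ b) - m b := by
      have := hmod a b; linarith
    constructor
    · rw [Gamma.le_iff, gsub'_re' hIA, gsub_re' hBU, hre, hre, hre, hre,
        gsub_tag' hBU (htag _) (htag _)]
      exact Or.inr ⟨key, Bool.le_true _⟩
    · rw [Gamma.le_iff, gsub'_re' hBU, gsub_re' hIA, hre, hre, hre, hre,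
        gsub_tag' hIA (htag _) (htag _)]
      exact Or.inr ⟨key.symm, Bool.le_true _⟩
end
end
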